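/- arXiv:1806.02035 — 3 statements merged into one kernel-verified Lean document; each statement's English description precedes it below -/
import Mathlib

section
/- Let E and F be normed spaces over ℂ, let f : E → F be a continuous linear map which is topologically strict, i.e., there exists a constant C > 0 such that for every x ∈ E the distance from x to ker f satisfies infDist(x, ker f) ≤ C · ‖f x‖. Let f̄ : Completion E → Completion F denote the unique continuous linear extension of f to the completions. Then the kernel of f̄ equals the closure in Completion E of the image of ker f under the canonical embedding E → Completion E. -/
/-!
Strictness says that every `f x` has a preimage of norm at most `(C + 1) * ‖f x‖` (namely `x - k`
for a nearly closest `k ∈ ker f`). Given `y` in the kernel of the extension, approximate it by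
`x ∈ E`; then `f x` is small, so it has a small preimage `x'`, and `x - x' ∈ ker f` is close to `y`.
This is `NormedAddGroupHom.ker_completion`.
-/

open UniformSpace Metric

namespace NormedAddGroupHom

variable {G H : Type*} [SeminormedAddCommGroup G] [NormedAddCommGroup H]

theorem surjectiveOnWith_range_of_infDist_ker_le {f : NormedAddGroupHom G H} {C : ℝ}
    (hf : ∀ x, infDist x (f.ker : Set G) ≤ C * ‖f x‖) : f.SurjectiveOnWith f.range (C + 1) := by
  rintro _ ⟨x, rfl⟩
  rcases eq_or_ne (f x) 0 with hx | hx
  · exact ⟨0, by simp [hx], by simp [hx]⟩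
  have hlt : infDist x (f.ker : Set G) < (C + 1) * ‖f x‖ := by
    have := norm_pos_iff.mpr hx
    linarith [hf x]
  obtain ⟨k, hk, hxk⟩ := (infDist_lt_iff ⟨0, f.ker.zero_mem⟩).mp hlt
  refine ⟨x - k, ?_, ?_⟩
  · simp [(f.mem_ker k).mp hk]
  · rw [← dist_eq_norm]
    exact hxk.le

theorem ker_completion_eq_closure_image_ker {f : NormedAddGroupHom G H} {C : ℝ}
    (hf : ∀ x, infDist x (f.ker : Set G) ≤ C * ‖f x‖) :
    (f.completion.ker : Set (Completion G)) = closure ((↑) '' (f.ker : Set G)) := by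
  rw [ker_completion (surjectiveOnWith_range_of_infDist_ker_le hf)]
  congr 1
  ext y
  simp [mem_range]

end NormedAddGroupHom

theorem ker_completion_extension_eq_closure_ker_general
    {E F : Type*} [NormedAddCommGroup E] [NormedSpace ℂ E]
    [NormedAddCommGroup F] [NormedSpace ℂ F]
    (f : E →L[ℂ] F) (C : ℝ)
    (hstrict : ∀ x : E, infDist x (LinearMap.ker (f : E →ₗ[ℂ] F) : Set E) ≤ C * ‖f x‖)
    (fbar : Completion E →L[ℂ] Completion F)
    (hext : ∀ x : E, fbar (x : Completion E) = ((f x : F) : Completion F)) :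
    (LinearMap.ker (fbar : Completion E →ₗ[ℂ] Completion F) : Set (Completion E)) =
      closure ((fun x : E => (x : Completion E)) '' (LinearMap.ker (f : E →ₗ[ℂ] F) : Set E)) := by
  set g := f.toLinearMap.toAddMonoidHom.mkNormedAddGroupHom ‖f‖ f.le_opNorm
  have hfbar : ⇑fbar = g.completion :=
    Completion.ext fbar.continuous g.completion.continuous fun x => by
      rw [hext, NormedAddGroupHom.completion_coe]
      rfl
  have hker : (LinearMap.ker (fbar : Completion E →ₗ[ℂ] Completion F) : Set (Completion E)) =
      g.completion.ker := by
    ext y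
    simp [hfbar, NormedAddGroupHom.mem_ker]
  exact hker.trans (g.ker_completion_eq_closure_image_ker hstrict)

/-- For a topologically strict continuous linear map `f : E → F` between normed
spaces, the kernel of the extension `f̄ : Completion E → Completion F` is the
closure of the image of `ker f` under the canonical embedding `E → Completion E`. -/
theorem ker_completion_extension_eq_closure_ker
    {E F : Type*} [NormedAddCommGroup E] [NormedSpace ℂ E]
    [NormedAddCommGroup F] [NormedSpace ℂ F]
    (f : E →L[ℂ] F) (C : ℝ) (hC : 0 < C)
    (hstrict : ∀ x : E, infDist x (LinearMap.ker (f : E →ₗ[ℂ] F) : Set E) ≤ C * ‖f x‖)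
    (fbar : Completion E →L[ℂ] Completion F)
    (hext : ∀ x : E, fbar (x : Completion E) = ((f x : F) : Completion F)) :
    (LinearMap.ker (fbar : Completion E →ₗ[ℂ] Completion F) : Set (Completion E)) =
      closure ((fun x : E => (x : Completion E)) '' (LinearMap.ker (f : E →ₗ[ℂ] F) : Set E)) :=
  ker_completion_extension_eq_closure_ker_general f C hstrict fbar hext
end

section
/- Let E and F be normed spaces over ℂ, let f : E → F be a continuous linear map which is topologically strict, i.e., there exists a constant C > 0 such that for every x ∈ E the distance from x to ker f satisfies infDist(x, ker f) ≤ C · ‖f x‖. Let f̄ : Completion E → Completion F denote the unique continuous linear extension of f to the completions. Then the range of f̄ equals the closure in Completion F of the image of f (viewed inside Completion F via the canonical embedding F → Completion F). -/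
/-!
Density of `E` in its completion gives `range f̄ ⊆ closure (range f)`. Conversely, strictness
says that every `f x` has a preimage of norm at most `2C‖f x‖`. Such a uniform bound on
preimages over a subgroup of the target passes to its closure when the source is complete:
approximate a limit point by a fast-converging sequence, lift the successive differences with
controlled norms and sum the resulting absolutely convergent series in `Completion E`
(`controlled_closure_of_complete`).
-/

open UniformSpace Metric

theorem LinearMap.exists_preimage_norm_le_of_infDist_ker_le {R E F : Type*} [Ring R]
    [SeminormedAddCommGroup E] [Module R E] [NormedAddCommGroup F] [Module R F]
    (f : E →ₗ[R] F) {C C' : ℝ} (hstrict : ∀ x : E, infDist x (ker f : Set E) ≤ C * ‖f x‖)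
    (hCC' : C < C') (x : E) : ∃ x' : E, f x' = f x ∧ ‖x'‖ ≤ C' * ‖f x‖ := by
  by_cases hfx : f x = 0
  · exact ⟨0, by simp [hfx], by simp [hfx]⟩
  have hlt : infDist x (ker f : Set E) < C' * ‖f x‖ :=
    (hstrict x).trans_lt (mul_lt_mul_of_pos_right hCC' (norm_pos_iff.2 hfx))
  obtain ⟨k, hk, hxk⟩ := (infDist_lt_iff ⟨0, (ker f).zero_mem⟩).1 hlt
  refine ⟨x - k, ?_, ?_⟩
  · rw [map_sub, LinearMap.mem_ker.1 hk, sub_zero]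
  · rw [← dist_eq_norm]
    exact hxk.le

theorem ContinuousLinearMap.closure_subset_range_of_exists_preimage_norm_le
    {𝕜 G H : Type*} [NontriviallyNormedField 𝕜] [NormedAddCommGroup G] [NormedSpace 𝕜 G]
    [CompleteSpace G] [NormedAddCommGroup H] [NormedSpace 𝕜 H] (g : G →L[𝕜] H)
    (K : AddSubgroup H) {C : ℝ} (hC : 0 < C) (hK : ∀ y ∈ K, ∃ x, g x = y ∧ ‖x‖ ≤ C * ‖y‖) :
    closure (K : Set H) ⊆ Set.range g := by
  let g' : NormedAddGroupHom G H :=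
    g.toLinearMap.toAddMonoidHom.mkNormedAddGroupHom ‖g‖ g.le_opNorm
  intro y hy
  obtain ⟨x, hx, -⟩ := controlled_closure_of_complete (f := g') hC one_pos hK y hy
  exact ⟨x, hx⟩

/-- For a topologically strict continuous linear map `f : E → F` between normed
spaces, the range of the extension `f̄ : Completion E → Completion F` is the
closure of the image of `f` viewed inside `Completion F` via the canonical
embedding `F → Completion F`. -/
theorem range_completion_extension_eq_closure_range
    {E F : Type*} [NormedAddCommGroup E] [NormedSpace ℂ E]
    [NormedAddCommGroup F] [NormedSpace ℂ F]
    (f : E →L[ℂ] F) (C : ℝ) (hC : 0 < C)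
    (hstrict : ∀ x : E, infDist x (LinearMap.ker (f : E →ₗ[ℂ] F) : Set E) ≤ C * ‖f x‖)
    (fbar : Completion E →L[ℂ] Completion F)
    (hext : ∀ x : E, fbar (x : Completion E) = ((f x : F) : Completion F)) :
    (LinearMap.range (fbar : Completion E →ₗ[ℂ] Completion F) : Set (Completion F)) =
      closure ((fun y : F => (y : Completion F)) '' (LinearMap.range (f : E →ₗ[ℂ] F) : Set F)) := by
  have himage : fbar '' Set.range ((↑) : E → Completion E) =
      (fun y : F => (y : Completion F)) '' (LinearMap.range (f : E →ₗ[ℂ] F) : Set F) := by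
    rw [← Set.range_comp, LinearMap.coe_range, ← Set.range_comp]
    exact congrArg Set.range (funext hext)
  let K := (LinearMap.range (f : E →ₗ[ℂ] F)).toAddSubgroup.map Completion.toCompl
  have hK : (K : Set (Completion F)) =
      (fun y : F => (y : Completion F)) '' (LinearMap.range (f : E →ₗ[ℂ] F) : Set F) := by
    simp [K, Completion.toCompl]
  refine (LinearMap.coe_range _).trans (subset_antisymm ?_ ?_)
  · rw [← himage]
    exact fbar.continuous.range_subset_closure_image_dense Completion.denseRange_coe
  · rw [← hK]
    refine fbar.closure_subset_range_of_exists_preimage_norm_le K (by positivity : 0 < 2 * C) ?_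
    rintro _ ⟨_, ⟨x, rfl⟩, rfl⟩
    obtain ⟨x', hx', hnorm⟩ := (f : E →ₗ[ℂ] F).exists_preimage_norm_le_of_infDist_ker_le
      hstrict (by linarith : C < 2 * C) x
    refine ⟨x', ?_, ?_⟩
    · rw [hext]
      exact congrArg ((↑) : F → Completion F) hx'
    · simpa [Completion.norm_coe] using hnorm
end

section
/- Let E₁, E₂, E₃ be normed spaces over ℂ and let f : E₁ → E₂ and g : E₂ → E₃ be continuous linear maps such that the sequence is exact, i.e., range f = ker g. Assume both f and g are topologically strict: there are constants C_f, C_g > 0 with infDist(x, ker f) ≤ C_f · ‖f x‖ for all x ∈ E₁ and infDist(y, ker g) ≤ C_g · ‖g y‖ for all y ∈ E₂. Let f̄ : Completion E₁ → Completion E₂ and ḡ : Completion E₂ → Completion E₃ be the unique continuous linear extensions to the completions. Then the completed sequence is again exact: range f̄ = ker ḡ. -/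
/-!
Composing the extensions vanishes on the dense image of `E₁`, hence everywhere, so
`range f̄ ≤ ker ḡ`. Conversely, the strictness bound for `g` extends by continuity to
`infDist y (ker g) ≤ C_g ‖ḡ y‖` on `Completion E₂`, so `ker ḡ` lies in the closure of
`ker g = range f`. Strictness of `f` gives every element of `range f` a preimage of controlled
norm; since `Completion E₁` is complete, a geometric-series argument
(`controlled_closure_of_complete`) extends this to the closure of `range f`, which therefore
lies in `range f̄`.
-/

open UniformSpace Metric

namespace ContinuousLinearMap

variable {𝕜 E F G : Type*} [NontriviallyNormedField 𝕜]
  [NormedAddCommGroup E] [NormedSpace 𝕜 E]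
  [NormedAddCommGroup F] [NormedSpace 𝕜 F]
  [NormedAddCommGroup G] [NormedSpace 𝕜 G]

def IsTopologicallyStrictWith (f : E →L[𝕜] F) (C : ℝ) : Prop :=
  ∀ x, infDist x (LinearMap.ker (f : E →ₗ[𝕜] F) : Set E) ≤ C * ‖f x‖

-- `|C| + 1`: the sign of `C` is not assumed, and the infimum distance needs some slack.
theorem IsTopologicallyStrictWith.exists_preimage_norm_le {f : E →L[𝕜] F} {C : ℝ}
    (hf : f.IsTopologicallyStrictWith C) (x : E) :
    ∃ x', f x' = f x ∧ ‖x'‖ ≤ (|C| + 1) * ‖f x‖ := by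
  rcases eq_or_ne (f x) 0 with h | h
  · exact ⟨0, by simp [h], by simp [h]⟩
  have hlt : infDist x (LinearMap.ker (f : E →ₗ[𝕜] F) : Set E) < (|C| + 1) * ‖f x‖ := by
    nlinarith [hf x, le_abs_self C, norm_pos_iff.2 h]
  obtain ⟨k, hk, hxk⟩ := (infDist_lt_iff ⟨0, Submodule.zero_mem _⟩).1 hlt
  refine ⟨x - k, ?_, (dist_eq_norm x k).symm.trans_le hxk.le⟩
  simpa [sub_eq_self] using hk

theorem IsTopologicallyStrictWith.infDist_ker_le_extension {g : F →L[𝕜] G} {C : ℝ}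
    (hg : g.IsTopologicallyStrictWith C)
    (gbar : Completion F →L[𝕜] Completion G) (hgext : ∀ y : F, gbar y = g y)
    (y : Completion F) :
    infDist y ((↑) '' (LinearMap.ker (g : F →ₗ[𝕜] G) : Set F)) ≤ C * ‖gbar y‖ := by
  induction y using Completion.induction_on with
  | hp => exact isClosed_le (by fun_prop) (by fun_prop)
  | ih y => rw [infDist_image Completion.coe_isometry, hgext, Completion.norm_coe]; exact hg y

theorem IsTopologicallyStrictWith.ker_extension_subset_closure {g : F →L[𝕜] G} {C : ℝ}
    (hg : g.IsTopologicallyStrictWith C)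
    (gbar : Completion F →L[𝕜] Completion G) (hgext : ∀ y : F, gbar y = g y) :
    (LinearMap.ker (gbar : Completion F →ₗ[𝕜] Completion G) : Set (Completion F)) ⊆
      closure ((↑) '' (LinearMap.ker (g : F →ₗ[𝕜] G) : Set F)) := by
  intro y hy
  rw [mem_closure_iff_infDist_zero (Set.Nonempty.image _ ⟨0, Submodule.zero_mem _⟩)]
  refine le_antisymm ?_ infDist_nonneg
  simpa [show gbar y = 0 from hy] using hg.infDist_ker_le_extension gbar hgext y

theorem IsTopologicallyStrictWith.closure_range_subset_range_extension
    {f : E →L[𝕜] F} {C : ℝ} (hf : f.IsTopologicallyStrictWith C)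
    (fbar : Completion E →L[𝕜] Completion F) (hfext : ∀ x : E, fbar x = f x) :
    closure ((↑) '' (LinearMap.range (f : E →ₗ[𝕜] F) : Set F)) ⊆
      (LinearMap.range (fbar : Completion E →ₗ[𝕜] Completion F) : Set (Completion F)) := by
  let φ : NormedAddGroupHom (Completion E) (Completion F) :=
    (fbar : Completion E →+ Completion F).mkNormedAddGroupHom ‖fbar‖ fbar.le_opNorm
  let K : AddSubgroup (Completion F) :=
    (LinearMap.range (f : E →ₗ[𝕜] F)).toAddSubgroup.map Completion.toCompl
  have hK : φ.SurjectiveOnWith K (|C| + 1) := by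
    rintro _ ⟨_, ⟨x, rfl⟩, rfl⟩
    obtain ⟨x', hfx', hx'⟩ := hf.exists_preimage_norm_le x
    refine ⟨x', ?_, by simpa using hx'⟩
    exact (hfext x').trans (congrArg ((↑) : F → Completion F) hfx')
  intro y hy
  obtain ⟨x, hx, -⟩ := controlled_closure_of_complete (by positivity) one_pos hK y hy
  exact ⟨x, hx⟩

theorem range_extension_le_ker_extension {f : E →L[𝕜] F} {g : F →L[𝕜] G}
    (hfg : LinearMap.range (f : E →ₗ[𝕜] F) ≤ LinearMap.ker (g : F →ₗ[𝕜] G))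
    (fbar : Completion E →L[𝕜] Completion F) (hfext : ∀ x : E, fbar x = f x)
    (gbar : Completion F →L[𝕜] Completion G) (hgext : ∀ y : F, gbar y = g y) :
    LinearMap.range (fbar : Completion E →ₗ[𝕜] Completion F) ≤
      LinearMap.ker (gbar : Completion F →ₗ[𝕜] Completion G) := by
  rintro _ ⟨x, rfl⟩
  induction x using Completion.induction_on with
  | hp => exact gbar.isClosed_ker.preimage fbar.continuous
  | ih x =>
    have hgfx : g (f x) = 0 := hfg (LinearMap.mem_range_self _ x)
    change gbar (fbar x) = 0
    rw [hfext, hgext, hgfx, Completion.coe_zero]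

end ContinuousLinearMap

open ContinuousLinearMap

theorem completion_preserves_topologically_exact_general
    {E₁ E₂ E₃ : Type*}
    [NormedAddCommGroup E₁] [NormedSpace ℂ E₁]
    [NormedAddCommGroup E₂] [NormedSpace ℂ E₂]
    [NormedAddCommGroup E₃] [NormedSpace ℂ E₃]
    (f : E₁ →L[ℂ] E₂) (g : E₂ →L[ℂ] E₃)
    (hexact : LinearMap.range (f : E₁ →ₗ[ℂ] E₂) = LinearMap.ker (g : E₂ →ₗ[ℂ] E₃))
    (Cf : ℝ)
    (hf : ∀ x : E₁, infDist x (LinearMap.ker (f : E₁ →ₗ[ℂ] E₂) : Set E₁) ≤ Cf * ‖f x‖)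
    (Cg : ℝ)
    (hg : ∀ y : E₂, infDist y (LinearMap.ker (g : E₂ →ₗ[ℂ] E₃) : Set E₂) ≤ Cg * ‖g y‖)
    (fbar : Completion E₁ →L[ℂ] Completion E₂)
    (hfext : ∀ x : E₁, fbar (x : Completion E₁) = ((f x : E₂) : Completion E₂))
    (gbar : Completion E₂ →L[ℂ] Completion E₃)
    (hgext : ∀ y : E₂, gbar (y : Completion E₂) = ((g y : E₃) : Completion E₃)) :
    LinearMap.range (fbar : Completion E₁ →ₗ[ℂ] Completion E₂) = LinearMap.ker (gbar : Completion E₂ →ₗ[ℂ] Completion E₃) := by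
  refine le_antisymm (range_extension_le_ker_extension hexact.le fbar hfext gbar hgext) ?_
  intro y hy
  have hy_closure :=
    IsTopologicallyStrictWith.ker_extension_subset_closure (g := g) hg gbar hgext hy
  rw [← hexact] at hy_closure
  exact IsTopologicallyStrictWith.closure_range_subset_range_extension (f := f) hf fbar hfext
    hy_closure

/-- Passing to completions preserves exactness of topologically exact sequences
of continuous linear maps between normed spaces: if `range f = ker g` and both
`f` and `g` are topologically strict, then the extensions to the completions
satisfy `range f̄ = ker ḡ`. -/
theorem completion_preserves_topologically_exact
    {E₁ E₂ E₃ : Type*}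
    [NormedAddCommGroup E₁] [NormedSpace ℂ E₁]
    [NormedAddCommGroup E₂] [NormedSpace ℂ E₂]
    [NormedAddCommGroup E₃] [NormedSpace ℂ E₃]
    (f : E₁ →L[ℂ] E₂) (g : E₂ →L[ℂ] E₃)
    (hexact : LinearMap.range (f : E₁ →ₗ[ℂ] E₂) = LinearMap.ker (g : E₂ →ₗ[ℂ] E₃))
    (Cf : ℝ) (hCf : 0 < Cf)
    (hf : ∀ x : E₁, infDist x (LinearMap.ker (f : E₁ →ₗ[ℂ] E₂) : Set E₁) ≤ Cf * ‖f x‖)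
    (Cg : ℝ) (hCg : 0 < Cg)
    (hg : ∀ y : E₂, infDist y (LinearMap.ker (g : E₂ →ₗ[ℂ] E₃) : Set E₂) ≤ Cg * ‖g y‖)
    (fbar : Completion E₁ →L[ℂ] Completion E₂)
    (hfext : ∀ x : E₁, fbar (x : Completion E₁) = ((f x : E₂) : Completion E₂))
    (gbar : Completion E₂ →L[ℂ] Completion E₃)
    (hgext : ∀ y : E₂, gbar (y : Completion E₂) = ((g y : E₃) : Completion E₃)) :
    LinearMap.range (fbar : Completion E₁ →ₗ[ℂ] Completion E₂) = LinearMap.ker (gbar : Completion E₂ →ₗ[ℂ] Completion E₃) :=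
  completion_preserves_topologically_exact_general f g hexact Cf hf Cg hg fbar hfext gbar hgext
end
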